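/- arXiv:1208.4264 — 3 statements merged into one kernel-verified Lean document; each statement's English description precedes it below -/
import Mathlib

section
/- Let θ, a, b, ρ ∈ ℝ and let I ⊆ ℝ be an open interval. Suppose α, β, γ, μ, ν, φ : I → ℝ are differentiable and satisfy on I the system: α̇ = 4θα² - 2aα - ρ, β̇ = 4θαβ - aβ, γ̇ = θβ², μ̇ = 4θαμ - aμ - 2bα, ν̇ = 2θβμ - bβ, φ̇ = φ·(θμ² + 2θα - bμ). Then for every x₀ ∈ ℝ, the function P(t, x) = φ(t)·exp(α(t)x² + β(t)x·x₀ + γ(t)x₀² + μ(t)x + ν(t)x₀) satisfies the heat equation ∂ₜP(t,x) = θ·∂ₓ²P(t,x) - (ax + b)·∂ₓP(t,x) - ρx²·P(t,x) for all t ∈ I and x ∈ ℝ. -/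
/-!
Every derivative of the Gaussian ansatz is `P` times a polynomial in `x`: in space,
`∂ₓP = P·(2αx + βx₀ + μ)` and `∂ₓ²P = P·((2αx + βx₀ + μ)² + 2α)`; in time, since `φ̇ = φ·k`,
`∂ₜP = P·(k + α̇x² + β̇xx₀ + γ̇x₀² + μ̇x + ν̇x₀)`. After dividing by `P`, the heat equation becomes
a polynomial identity in `x` and `x₀`, and the ODE system says precisely that its coefficients
agree.
-/

open Real

section GaussianDerivatives

variable (c A B C : ℝ)

theorem hasDerivAt_mul_exp_quadratic (y : ℝ) :
    HasDerivAt (fun y => c * exp (A * y ^ 2 + B * y + C))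
      (c * exp (A * y ^ 2 + B * y + C) * (2 * A * y + B)) y := by
  have hq : HasDerivAt (fun y => A * y ^ 2 + B * y + C) (2 * A * y + B) y := by
    refine ((((hasDerivAt_pow 2 y).const_mul A).add
      ((hasDerivAt_id y).const_mul B)).add_const C).congr_deriv ?_
    simp only [Nat.cast_ofNat]
    ring
  exact (hq.exp.const_mul c).congr_deriv (by ring)

theorem deriv_mul_exp_quadratic :
    deriv (fun y => c * exp (A * y ^ 2 + B * y + C)) =
      fun y => c * exp (A * y ^ 2 + B * y + C) * (2 * A * y + B) :=
  funext fun y => (hasDerivAt_mul_exp_quadratic c A B C y).deriv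

theorem deriv_deriv_mul_exp_quadratic (x : ℝ) :
    deriv (deriv (fun y => c * exp (A * y ^ 2 + B * y + C))) x =
      c * exp (A * x ^ 2 + B * x + C) * ((2 * A * x + B) ^ 2 + 2 * A) := by
  have hlin : HasDerivAt (fun y => 2 * A * y + B) (2 * A) x := by
    simpa using ((hasDerivAt_id x).const_mul (2 * A)).add_const B
  have h : HasDerivAt (fun y => c * exp (A * y ^ 2 + B * y + C) * (2 * A * y + B))
      (c * exp (A * x ^ 2 + B * x + C) * (2 * A * x + B) * (2 * A * x + B)
        + c * exp (A * x ^ 2 + B * x + C) * (2 * A)) x :=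
    (hasDerivAt_mul_exp_quadratic c A B C x).mul hlin
  rw [deriv_mul_exp_quadratic, h.deriv]
  ring

end GaussianDerivatives

theorem hasDerivAt_mul_exp_of_hasDerivAt_eq_mul {φ q : ℝ → ℝ} {k q' t : ℝ}
    (hφ : HasDerivAt φ (φ t * k) t) (hq : HasDerivAt q q' t) :
    HasDerivAt (fun t => φ t * exp (q t)) (φ t * exp (q t) * (k + q')) t :=
  (hφ.mul hq.exp).congr_deriv (by ring)

theorem stmt_11_general (θ a b ρ : ℝ) (I : Set ℝ)
    (α β γ μ ν φ : ℝ → ℝ)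
    (hα : ∀ t ∈ I, HasDerivAt α (4 * θ * α t ^ 2 - 2 * a * α t - ρ) t)
    (hβ : ∀ t ∈ I, HasDerivAt β (4 * θ * α t * β t - a * β t) t)
    (hγ : ∀ t ∈ I, HasDerivAt γ (θ * β t ^ 2) t)
    (hμ : ∀ t ∈ I, HasDerivAt μ (4 * θ * α t * μ t - a * μ t - 2 * b * α t) t)
    (hν : ∀ t ∈ I, HasDerivAt ν (2 * θ * β t * μ t - b * β t) t)
    (hφ : ∀ t ∈ I, HasDerivAt φ (φ t * (θ * μ t ^ 2 + 2 * θ * α t - b * μ t)) t)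
    (x₀ : ℝ) (P : ℝ → ℝ → ℝ)
    (hP : ∀ t x, P t x =
      φ t * Real.exp (α t * x ^ 2 + β t * x * x₀ + γ t * x₀ ^ 2 + μ t * x + ν t * x₀)) :
    ∀ t ∈ I, ∀ x : ℝ,
      deriv (fun t' => P t' x) t =
        θ * deriv (deriv (fun x' => P t x')) x
          - (a * x + b) * deriv (fun x' => P t x') x
          - ρ * x ^ 2 * P t x := by
  intro t ht x
  have hspace : (fun x' => P t x') = fun y =>
      φ t * exp (α t * y ^ 2 + (β t * x₀ + μ t) * y + (γ t * x₀ ^ 2 + ν t * x₀)) := by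
    funext y
    rw [hP]
    congr 2
    ring
  have hexponent : HasDerivAt
      (fun t' => α t' * x ^ 2 + β t' * x * x₀ + γ t' * x₀ ^ 2 + μ t' * x + ν t' * x₀) _ t :=
    ((((hα t ht).mul_const (x ^ 2)).add (((hβ t ht).mul_const x).mul_const x₀)).add
      ((hγ t ht).mul_const (x₀ ^ 2))).add ((hμ t ht).mul_const x) |>.add ((hν t ht).mul_const x₀)
  have htime := hasDerivAt_mul_exp_of_hasDerivAt_eq_mul (hφ t ht) hexponent
  simp only [← hP] at htime
  rw [htime.deriv, hspace, deriv_deriv_mul_exp_quadratic, deriv_mul_exp_quadratic]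
  simp only [← congrFun hspace x]
  ring

/-- If the coefficients `α, β, γ, μ, ν, φ` of the Gaussian ansatz satisfy the ODE
system `α̇ = 4θα² - 2aα - ρ`, `β̇ = 4θαβ - aβ`, `γ̇ = θβ²`, `μ̇ = 4θαμ - aμ - 2bα`,
`ν̇ = 2θβμ - bβ`, `φ̇ = φ(θμ² + 2θα - bμ)` on an open interval `I`, then
`P(t,x) = φ(t)exp(α(t)x² + β(t)xx₀ + γ(t)x₀² + μ(t)x + ν(t)x₀)` satisfies
`∂ₜP = θ∂ₓ²P - (ax+b)∂ₓP - ρx²P` on `I × ℝ`. -/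
theorem stmt_11 (θ a b ρ : ℝ) (I : Set ℝ) (hI : IsOpen I) (hI' : I.OrdConnected)
    (α β γ μ ν φ : ℝ → ℝ)
    (hα : ∀ t ∈ I, HasDerivAt α (4 * θ * α t ^ 2 - 2 * a * α t - ρ) t)
    (hβ : ∀ t ∈ I, HasDerivAt β (4 * θ * α t * β t - a * β t) t)
    (hγ : ∀ t ∈ I, HasDerivAt γ (θ * β t ^ 2) t)
    (hμ : ∀ t ∈ I, HasDerivAt μ (4 * θ * α t * μ t - a * μ t - 2 * b * α t) t)
    (hν : ∀ t ∈ I, HasDerivAt ν (2 * θ * β t * μ t - b * β t) t)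
    (hφ : ∀ t ∈ I, HasDerivAt φ (φ t * (θ * μ t ^ 2 + 2 * θ * α t - b * μ t)) t)
    (x₀ : ℝ) (P : ℝ → ℝ → ℝ)
    (hP : ∀ t x, P t x =
      φ t * Real.exp (α t * x ^ 2 + β t * x * x₀ + γ t * x₀ ^ 2 + μ t * x + ν t * x₀)) :
    ∀ t ∈ I, ∀ x : ℝ,
      deriv (fun t' => P t' x) t =
        θ * deriv (deriv (fun x' => P t x')) x
          - (a * x + b) * deriv (fun x' => P t x') x
          - ρ * x ^ 2 * P t x :=
  stmt_11_general θ a b ρ I α β γ μ ν φ hα hβ hγ hμ hν hφ x₀ P hP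
end

section
/- Let θ > 0, a, b ∈ ℝ, ρ ∈ ℝ \ {0} with a² + 4ρθ = 0. For x₀ ∈ ℝ define, for t > 0 and x ∈ ℝ, P(t, x) = (1/(4πθt))^{1/2} · exp{(a/2 - b²/(4θ))t + (a²b²/(48θ))t³} · exp{(a/(4θ) - 1/(4θt))·(x² + x₀²) + (1/(2θt))·x·x₀ + (-(ab/(4θ))t + b/(2θ))·(x + x₀)}. Then P satisfies ∂ₜP(t,x) = θ·∂ₓ²P(t,x) - (ax + b)·∂ₓP(t,x) - ρx²·P(t,x) for all t > 0 and x ∈ ℝ. -/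
/-!
Write `P = √(1/(4πθt)) · e^{g(t)} · e^{Q(t,x)}` with `Q` quadratic in `x`. Every derivative in
the equation is then `P` times an explicit rational function of `t` and `x`, and after dividing by
`P` the equation becomes a polynomial identity in `x`, whose `x²`-coefficients agree exactly when
`a² + 4ρθ = 0`.
-/

open Real

theorem deriv_deriv_const_mul_exp {q q' : ℝ → ℝ} {q'' x : ℝ} (hq : ∀ y, HasDerivAt q (q' y) y)
    (hq' : HasDerivAt q' q'' x) (K : ℝ) :
    deriv (deriv fun y => K * exp (q y)) x = K * exp (q x) * (q' x ^ 2 + q'') := by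
  have hderiv : deriv (fun y => K * exp (q y)) = fun y => K * exp (q y) * q' y := by
    funext y
    rw [((hq y).exp.const_mul K).deriv, mul_assoc]
  rw [hderiv, (((hq x).exp.const_mul K).fun_mul hq').deriv]
  ring

theorem hasDerivAt_one_div_mul {c t : ℝ} (hct : c * t ≠ 0) :
    HasDerivAt (fun s => 1 / (c * s)) (-c / (c * t) ^ 2) t := by
  simpa only [one_div, mul_one] using ((hasDerivAt_id' t).const_mul c).fun_inv hct

theorem hasDerivAt_sqrt_one_div_mul {c t : ℝ} (hct : 0 < c * t) :
    HasDerivAt (fun s => √(1 / (c * s))) (-√(1 / (c * t)) / (2 * t)) t := by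
  have ht : t ≠ 0 := right_ne_zero_of_mul hct.ne'
  convert (hasDerivAt_one_div_mul hct.ne').sqrt (by positivity) using 1
  have hsq : √(1 / (c * t)) ^ 2 = 1 / (c * t) := sq_sqrt (by positivity)
  field_simp
  rw [hsq]
  field_simp

noncomputable section

namespace HeatKernelII

def temporalExponent (θ a b t : ℝ) : ℝ :=
  (a / 2 - b ^ 2 / (4 * θ)) * t + a ^ 2 * b ^ 2 / (48 * θ) * t ^ 3

def spatialExponent (θ a b x₀ t x : ℝ) : ℝ :=
  (a / (4 * θ) - 1 / (4 * θ * t)) * (x ^ 2 + x₀ ^ 2) + 1 / (2 * θ * t) * (x * x₀)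
    + (-(a * b / (4 * θ)) * t + b / (2 * θ)) * (x + x₀)

def spatialGradient (θ a b x₀ t x : ℝ) : ℝ :=
  2 * (a / (4 * θ) - 1 / (4 * θ * t)) * x + 1 / (2 * θ * t) * x₀
    + (-(a * b / (4 * θ)) * t + b / (2 * θ))

def timeRate (θ a b x₀ t x : ℝ) : ℝ :=
  -1 / (2 * t) + (a / 2 - b ^ 2 / (4 * θ) + a ^ 2 * b ^ 2 / (16 * θ) * t ^ 2)
    + ((x - x₀) ^ 2 / (4 * θ * t ^ 2) - a * b / (4 * θ) * (x + x₀))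

def kernel (θ a b x₀ t x : ℝ) : ℝ :=
  √(1 / (4 * π * θ * t)) * exp (temporalExponent θ a b t) * exp (spatialExponent θ a b x₀ t x)

variable {θ a b x₀ t x : ℝ}

theorem hasDerivAt_temporalExponent :
    HasDerivAt (temporalExponent θ a b)
      (a / 2 - b ^ 2 / (4 * θ) + a ^ 2 * b ^ 2 / (16 * θ) * t ^ 2) t := by
  have := ((hasDerivAt_id t).const_mul (a / 2 - b ^ 2 / (4 * θ))).add
    ((hasDerivAt_pow 3 t).const_mul (a ^ 2 * b ^ 2 / (48 * θ)))
  exact this.congr_deriv (by norm_num; ring)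

theorem hasDerivAt_spatialExponent_time (hθ : θ ≠ 0) (ht : t ≠ 0) :
    HasDerivAt (fun s => spatialExponent θ a b x₀ s x)
      ((x - x₀) ^ 2 / (4 * θ * t ^ 2) - a * b / (4 * θ) * (x + x₀)) t := by
  have := ((((hasDerivAt_one_div_mul (c := 4 * θ) (by positivity)).const_sub (a / (4 * θ))).mul_const
    (x ^ 2 + x₀ ^ 2)).add ((hasDerivAt_one_div_mul (c := 2 * θ) (by positivity)).mul_const (x * x₀))).add
    ((((hasDerivAt_id t).const_mul (-(a * b / (4 * θ)))).add_const (b / (2 * θ))).mul_const (x + x₀))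
  refine this.congr_deriv ?_
  field_simp
  ring

theorem hasDerivAt_spatialExponent_space (y : ℝ) :
    HasDerivAt (spatialExponent θ a b x₀ t) (spatialGradient θ a b x₀ t y) y := by
  have := ((((hasDerivAt_pow 2 y).add_const (x₀ ^ 2)).const_mul (a / (4 * θ) - 1 / (4 * θ * t))).add
    ((hasDerivAt_mul_const x₀).const_mul (1 / (2 * θ * t)))).add
    (((hasDerivAt_id y).add_const x₀).const_mul (-(a * b / (4 * θ)) * t + b / (2 * θ)))
  exact this.congr_deriv (by norm_num [spatialGradient]; ring)

theorem hasDerivAt_spatialGradient (y : ℝ) :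
    HasDerivAt (spatialGradient θ a b x₀ t) (2 * (a / (4 * θ) - 1 / (4 * θ * t))) y := by
  have := (((hasDerivAt_id' y).const_mul (2 * (a / (4 * θ) - 1 / (4 * θ * t)))).add_const
    (1 / (2 * θ * t) * x₀)).add_const (-(a * b / (4 * θ)) * t + b / (2 * θ))
  exact this.congr_deriv (mul_one _)

theorem deriv_kernel_space :
    deriv (kernel θ a b x₀ t) x = kernel θ a b x₀ t x * spatialGradient θ a b x₀ t x :=
  ((hasDerivAt_spatialExponent_space x).exp.const_mul _).deriv.trans (mul_assoc _ _ _).symm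

theorem deriv_deriv_kernel_space :
    deriv (deriv (kernel θ a b x₀ t)) x = kernel θ a b x₀ t x
      * (spatialGradient θ a b x₀ t x ^ 2 + 2 * (a / (4 * θ) - 1 / (4 * θ * t))) :=
  deriv_deriv_const_mul_exp hasDerivAt_spatialExponent_space (hasDerivAt_spatialGradient x) _

theorem hasDerivAt_kernel_time (hθ : 0 < θ) (ht : 0 < t) :
    HasDerivAt (fun s => kernel θ a b x₀ s x)
      (kernel θ a b x₀ t x * timeRate θ a b x₀ t x) t := by
  have hsqrt := hasDerivAt_sqrt_one_div_mul (c := 4 * π * θ) (by positivity : 0 < 4 * π * θ * t)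
  refine ((hsqrt.fun_mul hasDerivAt_temporalExponent.exp).fun_mul
    (hasDerivAt_spatialExponent_time hθ.ne' ht.ne').exp).congr_deriv ?_
  unfold kernel timeRate
  field_simp

theorem timeRate_eq_of_critical {ρ : ℝ} (hθ : θ ≠ 0) (ht : t ≠ 0) (h : a ^ 2 + 4 * ρ * θ = 0) :
    timeRate θ a b x₀ t x = θ * (spatialGradient θ a b x₀ t x ^ 2 + 2 * (a / (4 * θ) - 1 / (4 * θ * t)))
        - (a * x + b) * spatialGradient θ a b x₀ t x - ρ * x ^ 2 := by
  have hρ : ρ = -a ^ 2 / (4 * θ) := by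
    field_simp
    linarith
  simp only [timeRate, spatialGradient, hρ]
  field_simp
  ring

end HeatKernelII

end

open HeatKernelII in
theorem stmt_15_general (θ a b ρ : ℝ) (hθ : 0 < θ) (h : a ^ 2 + 4 * ρ * θ = 0)
    (x₀ : ℝ) (P : ℝ → ℝ → ℝ)
    (hP : ∀ t x, P t x =
      Real.sqrt (1 / (4 * Real.pi * θ * t))
        * Real.exp ((a / 2 - b ^ 2 / (4 * θ)) * t + a ^ 2 * b ^ 2 / (48 * θ) * t ^ 3)
        * Real.exp ((a / (4 * θ) - 1 / (4 * θ * t)) * (x ^ 2 + x₀ ^ 2)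
            + 1 / (2 * θ * t) * (x * x₀)
            + (-(a * b / (4 * θ)) * t + b / (2 * θ)) * (x + x₀))) :
    ∀ t ∈ Set.Ioi (0 : ℝ), ∀ x : ℝ,
      deriv (fun t' => P t' x) t =
        θ * deriv (deriv (fun x' => P t x')) x
          - (a * x + b) * deriv (fun x' => P t x') x
          - ρ * x ^ 2 * P t x := by
  intro t ht x
  obtain rfl : P = kernel θ a b x₀ := funext fun t => funext (hP t)
  rw [(hasDerivAt_kernel_time hθ ht).deriv, deriv_deriv_kernel_space, deriv_kernel_space,
    timeRate_eq_of_critical hθ.ne' (ne_of_gt ht) h]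
  ring

/-- The Type II heat kernel (critical case `a² + 4ρθ = 0`) of
`L = -θ∂ₓ² + (ax+b)∂ₓ + ρx²` satisfies `∂ₜP = θ∂ₓ²P - (ax+b)∂ₓP - ρx²P` for `t > 0`. -/
theorem stmt_15 (θ a b ρ : ℝ) (hθ : 0 < θ) (hρ : ρ ≠ 0) (h : a ^ 2 + 4 * ρ * θ = 0)
    (x₀ : ℝ) (P : ℝ → ℝ → ℝ)
    (hP : ∀ t x, P t x =
      Real.sqrt (1 / (4 * Real.pi * θ * t))
        * Real.exp ((a / 2 - b ^ 2 / (4 * θ)) * t + a ^ 2 * b ^ 2 / (48 * θ) * t ^ 3)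
        * Real.exp ((a / (4 * θ) - 1 / (4 * θ * t)) * (x ^ 2 + x₀ ^ 2)
            + 1 / (2 * θ * t) * (x * x₀)
            + (-(a * b / (4 * θ)) * t + b / (2 * θ)) * (x + x₀))) :
    ∀ t ∈ Set.Ioi (0 : ℝ), ∀ x : ℝ,
      deriv (fun t' => P t' x) t =
        θ * deriv (deriv (fun x' => P t x')) x
          - (a * x + b) * deriv (fun x' => P t x') x
          - ρ * x ^ 2 * P t x :=
  stmt_15_general θ a b ρ hθ h x₀ P hP
end

section
/- Let n ≥ 1 and x₀ ∈ ℝⁿ. Define, for t > 0 and x ∈ ℝⁿ, P(t, x) = (√5·e^t / (4π·sinh(√5·t)))^{n/2} · exp{((1 - √5·coth(√5·t))/4)·(|x|² + |x₀|²) + (√5/(2·sinh(√5·t)))·(x·x₀)}, where x·x₀ is the Euclidean inner product and |·| the Euclidean norm. Then P satisfies ∂ₜP(t,x) = ΔP(t,x) - x·∇P(t,x) - |x|²·P(t,x) for all t > 0 and x ∈ ℝⁿ, where Δ and ∇ act in the variable x. -/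
/-!
For fixed `t`, `P t` is a Gaussian `V exp (B (|x|² + |x₀|²) + C x·x₀)`. Its partial derivatives
are `P (2 B xⱼ + C x₀ⱼ)`, so `ΔP - x·∇P - |x|² P` is `P` times a quadratic polynomial in `x`,
while `∂ₜP` is `P (V'/V + B' (|x|² + |x₀|²) + C' x·x₀)`. Matching coefficients, the equation
reduces to the Riccati system `B' = C² = 4B² - 2B - 1`, `C' = (4B - 1) C`, `V' = 2nBV`, which is
solved by `B = (1 - √5 coth (√5 t)) / 4`, `C = √5 / (2 sinh (√5 t))` and
`V = (√5 eᵗ / (4π sinh (√5 t)))^(n/2)`.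
-/

/-- The hyperbolic cotangent. -/
noncomputable def coth (x : ℝ) : ℝ := Real.cosh x / Real.sinh x

open Real Finset Function

noncomputable section

section Gaussian

variable {ι : Type*} [Fintype ι]

def gaussian (V B C : ℝ) (x₀ x : ι → ℝ) : ℝ :=
  V * exp (B * (∑ j, x j ^ 2 + ∑ j, x₀ j ^ 2) + C * ∑ j, x j * x₀ j)

theorem hasDerivAt_gaussian_time {V B C : ℝ → ℝ} {v B' C' t : ℝ}
    (hV : HasDerivAt V (V t * v) t) (hB : HasDerivAt B B' t) (hC : HasDerivAt C C' t)
    (x₀ x : ι → ℝ) :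
    HasDerivAt (fun t => gaussian (V t) (B t) (C t) x₀ x)
      (gaussian (V t) (B t) (C t) x₀ x
        * (v + B' * (∑ j, x j ^ 2 + ∑ j, x₀ j ^ 2) + C' * ∑ j, x j * x₀ j)) t := by
  refine (hV.mul ((hB.mul_const _).add (hC.mul_const _)).exp).congr_deriv ?_
  simp only [gaussian, Pi.add_apply]
  ring

variable [DecidableEq ι]

theorem hasDerivAt_sum_update {g : ι → ℝ → ℝ} {g' y : ℝ} (x : ι → ℝ) {j : ι}
    (h : HasDerivAt (g j) g' y) :
    HasDerivAt (fun y => ∑ k, g k (update x j y k)) g' y := by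
  have hsplit : (fun y => ∑ k, g k (update x j y k))
      = fun y => g j y + ∑ k ∈ univ.erase j, g k (x k) := by
    funext y
    rw [← add_sum_erase _ _ (mem_univ j), update_self]
    congr 1
    refine sum_congr rfl fun k hk => ?_
    rw [update_of_ne (ne_of_mem_erase hk)]
  rw [hsplit]
  exact h.add_const _

variable (V B C : ℝ) (x₀ x : ι → ℝ) (j : ι)

theorem hasDerivAt_gaussian_update (y : ℝ) :
    HasDerivAt (fun y => gaussian V B C x₀ (update x j y))
      (gaussian V B C x₀ (update x j y) * (2 * B * y + C * x₀ j)) y := by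
  have hS : HasDerivAt (fun y => ∑ k, update x j y k ^ 2) (2 * y) y := by
    simpa using hasDerivAt_sum_update (g := fun _ y => y ^ 2) x (hasDerivAt_pow 2 y)
  have hD : HasDerivAt (fun y => ∑ k, update x j y k * x₀ k) (x₀ j) y := by
    simpa using hasDerivAt_sum_update (g := fun k y => y * x₀ k) x
      ((hasDerivAt_id y).mul_const (x₀ j))
  refine HasDerivAt.congr_deriv (f := fun y => gaussian V B C x₀ (update x j y))
    ((((hS.add_const (∑ k, x₀ k ^ 2)).const_mul B).add (hD.const_mul C)).exp.const_mul V) ?_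
  simp only [gaussian, Pi.add_apply]
  ring

theorem deriv_gaussian_update :
    deriv (fun y => gaussian V B C x₀ (update x j y)) (x j)
      = gaussian V B C x₀ x * (2 * B * x j + C * x₀ j) := by
  rw [(hasDerivAt_gaussian_update V B C x₀ x j (x j)).deriv, update_eq_self]

theorem deriv_deriv_gaussian_update :
    deriv (deriv (fun y => gaussian V B C x₀ (update x j y))) (x j)
      = gaussian V B C x₀ x * ((2 * B * x j + C * x₀ j) ^ 2 + 2 * B) := by
  have hderiv : deriv (fun y => gaussian V B C x₀ (update x j y))
      = fun y => gaussian V B C x₀ (update x j y) * (2 * B * y + C * x₀ j) :=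
    funext fun y => (hasDerivAt_gaussian_update V B C x₀ x j y).deriv
  have hlin : HasDerivAt (fun y => 2 * B * y + C * x₀ j) (2 * B) (x j) := by
    simpa using ((hasDerivAt_id (x j)).const_mul (2 * B)).add_const (C * x₀ j)
  rw [hderiv]
  refine ((hasDerivAt_gaussian_update V B C x₀ x j (x j)).mul hlin).deriv.trans ?_
  rw [update_eq_self]
  ring

theorem gaussian_spatial_operator :
    (∑ j, deriv (deriv (fun y => gaussian V B C x₀ (update x j y))) (x j))
        - (∑ j, x j * deriv (fun y => gaussian V B C x₀ (update x j y)) (x j))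
        - (∑ j, x j ^ 2) * gaussian V B C x₀ x
      = gaussian V B C x₀ x * ((4 * B ^ 2 - 2 * B - 1) * ∑ j, x j ^ 2 + C ^ 2 * ∑ j, x₀ j ^ 2
          + (4 * B - 1) * C * ∑ j, x j * x₀ j + 2 * B * Fintype.card ι) := by
  have hcard : (Fintype.card ι : ℝ) = ∑ _k : ι, 1 := by simp
  simp only [deriv_deriv_gaussian_update, deriv_gaussian_update, hcard, mul_sum, sum_mul,
    ← sum_sub_distrib, ← sum_add_distrib]
  refine sum_congr rfl fun k _ => ?_
  ring

theorem deriv_gaussian_eq_spatial_operator {V B C : ℝ → ℝ} {t : ℝ}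
    (hV : HasDerivAt V (V t * (2 * Fintype.card ι * B t)) t)
    (hB : HasDerivAt B (C t ^ 2) t) (hC : HasDerivAt C ((4 * B t - 1) * C t) t)
    (hBC : 4 * B t ^ 2 - 2 * B t - 1 = C t ^ 2) :
    deriv (fun t => gaussian (V t) (B t) (C t) x₀ x) t =
      (∑ j, deriv (deriv (fun y => gaussian (V t) (B t) (C t) x₀ (update x j y))) (x j))
        - (∑ j, x j * deriv (fun y => gaussian (V t) (B t) (C t) x₀ (update x j y)) (x j))
        - (∑ j, x j ^ 2) * gaussian (V t) (B t) (C t) x₀ x := by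
  rw [(hasDerivAt_gaussian_time hV hB hC x₀ x).deriv, gaussian_spatial_operator, hBC]
  ring

end Gaussian

theorem hasDerivAt_coth {x : ℝ} (hx : x ≠ 0) : HasDerivAt coth (-1 / sinh x ^ 2) x := by
  refine HasDerivAt.congr_deriv (f := coth)
    ((hasDerivAt_cosh x).div (hasDerivAt_sinh x) (sinh_ne_zero.2 hx)) ?_
  congr 1
  linear_combination -cosh_sq x

theorem HasDerivAt.rpow_const_of_eq_mul {f : ℝ → ℝ} {k x : ℝ} (p : ℝ)
    (hf : HasDerivAt f (f x * k) x) (hx : f x ≠ 0) :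
    HasDerivAt (fun y => f y ^ p) (f x ^ p * (p * k)) x := by
  refine (hf.rpow_const (Or.inl hx)).congr_deriv ?_
  rw [rpow_sub_one hx]
  field_simp

section OscillatorCoefficients

def quadCoeff (a t : ℝ) : ℝ := (1 - a * coth (a * t)) / 4

def crossCoeff (a t : ℝ) : ℝ := a / (2 * sinh (a * t))

variable {a t : ℝ}

theorem hasDerivAt_mul_exp_div_sinh (K : ℝ) {L : ℝ} (hL : L ≠ 0) (hat : a * t ≠ 0) :
    HasDerivAt (fun t => K * exp t / (L * sinh (a * t)))
      (K * exp t / (L * sinh (a * t)) * (1 - a * coth (a * t))) t := by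
  have hs : sinh (a * t) ≠ 0 := sinh_ne_zero.2 hat
  have hsinh := (((hasDerivAt_id t).const_mul a).sinh).const_mul L
  refine (((hasDerivAt_exp t).const_mul K).div hsinh (mul_ne_zero hL hs)).congr_deriv ?_
  simp only [coth, id]
  field_simp

theorem hasDerivAt_quadCoeff (hat : a * t ≠ 0) :
    HasDerivAt (quadCoeff a) (crossCoeff a t ^ 2) t := by
  have hcoth := (hasDerivAt_coth hat).comp t ((hasDerivAt_id t).const_mul a)
  refine ((hcoth.const_mul a).const_sub 1 |>.div_const 4).congr_deriv ?_
  simp only [crossCoeff]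
  ring

theorem hasDerivAt_crossCoeff (hat : a * t ≠ 0) :
    HasDerivAt (crossCoeff a) ((4 * quadCoeff a t - 1) * crossCoeff a t) t := by
  have hs : sinh (a * t) ≠ 0 := sinh_ne_zero.2 hat
  have hsinh := (((hasDerivAt_id t).const_mul a).sinh).const_mul 2
  refine ((hasDerivAt_const t a).div hsinh (mul_ne_zero two_ne_zero hs)).congr_deriv ?_
  simp only [quadCoeff, crossCoeff, coth, id]
  field_simp
  ring

theorem quadCoeff_riccati (ha : a ^ 2 = 5) (hat : a * t ≠ 0) :
    4 * quadCoeff a t ^ 2 - 2 * quadCoeff a t - 1 = crossCoeff a t ^ 2 := by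
  have hs : sinh (a * t) ≠ 0 := sinh_ne_zero.2 hat
  simp only [quadCoeff, crossCoeff, coth]
  field_simp
  linear_combination 4 * sinh (a * t) ^ 2 * ha + 4 * a ^ 2 * cosh_sq (a * t)

end OscillatorCoefficients

end

theorem stmt_18_general (n : ℕ) (x₀ : Fin n → ℝ) (P : ℝ → (Fin n → ℝ) → ℝ)
    (hP : ∀ t x, P t x =
      (Real.sqrt 5 * Real.exp t / (4 * Real.pi * Real.sinh (Real.sqrt 5 * t))) ^ ((n : ℝ) / 2)
        * Real.exp ((1 - Real.sqrt 5 * coth (Real.sqrt 5 * t)) / 4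
              * ((∑ j, x j ^ 2) + ∑ j, x₀ j ^ 2)
            + Real.sqrt 5 / (2 * Real.sinh (Real.sqrt 5 * t)) * ∑ j, x j * x₀ j)) :
    ∀ t ∈ Set.Ioi (0 : ℝ), ∀ x : Fin n → ℝ,
      deriv (fun t' => P t' x) t =
        (∑ j, deriv (deriv (fun y => P t (Function.update x j y))) (x j))
          - (∑ j, x j * deriv (fun y => P t (Function.update x j y)) (x j))
          - (∑ j, x j ^ 2) * P t x := by
  intro t ht x
  obtain rfl : P = fun t x => gaussian ((√5 * exp t / (4 * π * sinh (√5 * t))) ^ ((n : ℝ) / 2))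
      (quadCoeff √5 t) (crossCoeff √5 t) x₀ x :=
    funext fun t => funext (hP t)
  beta_reduce
  have ht5 : 0 < √5 * t := mul_pos (by positivity) ht
  have hamplitude := (hasDerivAt_mul_exp_div_sinh (√5) (by positivity : 4 * π ≠ 0)
    ht5.ne').rpow_const_of_eq_mul ((n : ℝ) / 2) (by have := sinh_pos_iff.2 ht5; positivity)
  refine deriv_gaussian_eq_spatial_operator x₀ x (hamplitude.congr_deriv ?_)
    (hasDerivAt_quadCoeff ht5.ne') (hasDerivAt_crossCoeff ht5.ne')
    (quadCoeff_riccati (sq_sqrt (by norm_num)) ht5.ne')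
  rw [Fintype.card_fin, quadCoeff]
  ring

/-- The heat kernel of the `n`-dimensional perturbed Ornstein-Uhlenbeck operator
`L⁺ = -Δ + x·∇ + |x|²` satisfies `∂ₜP = ΔP - x·∇P - |x|²P` for `t > 0`. -/
theorem stmt_18 (n : ℕ) (hn : 1 ≤ n) (x₀ : Fin n → ℝ) (P : ℝ → (Fin n → ℝ) → ℝ)
    (hP : ∀ t x, P t x =
      (Real.sqrt 5 * Real.exp t / (4 * Real.pi * Real.sinh (Real.sqrt 5 * t))) ^ ((n : ℝ) / 2)
        * Real.exp ((1 - Real.sqrt 5 * coth (Real.sqrt 5 * t)) / 4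
              * ((∑ j, x j ^ 2) + ∑ j, x₀ j ^ 2)
            + Real.sqrt 5 / (2 * Real.sinh (Real.sqrt 5 * t)) * ∑ j, x j * x₀ j)) :
    ∀ t ∈ Set.Ioi (0 : ℝ), ∀ x : Fin n → ℝ,
      deriv (fun t' => P t' x) t =
        (∑ j, deriv (deriv (fun y => P t (Function.update x j y))) (x j))
          - (∑ j, x j * deriv (fun y => P t (Function.update x j y)) (x j))
          - (∑ j, x j ^ 2) * P t x :=
  stmt_18_general n x₀ P hP
end
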